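/- Let F : N → N' be a map of fans Δ in N and Δ' in N'. If h' : |Δ'| → ℚ^k is a convex support map on Δ', then h := h' ∘ F is a convex support map on Δ, and F is a map of the associated quasifans Σ_h and Σ_{h'}. -/
import Mathlib


/-! Convex geometry over ℚ: polyhedral cones, quasifans, fans, support maps. -/

namespace ToricQuot

variable {E V : Type} [AddCommGroup E] [Module ℚ E] [AddCommGroup V] [Module ℚ V]

/-- The convex cone generated by a set: all finite nonnegative rational combinations. -/
def coneHull (s : Set E) : Set E :=
  {x | ∃ (m : ℕ) (c : Fin m → ℚ) (v : Fin m → E),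
    (∀ i, 0 ≤ c i) ∧ (∀ i, v i ∈ s) ∧ x = ∑ i, c i • v i}

/-- A (rational) polyhedral convex cone: the conic hull of a finite set. -/
def IsPolyCone (σ : Set E) : Prop := ∃ s : Set E, s.Finite ∧ σ = coneHull s

/-- `F` is a face of the cone `σ`: it is cut out of `σ` by a supporting linear form. -/
def IsFaceOf (F σ : Set E) : Prop :=
  ∃ u : E →ₗ[ℚ] ℚ, (∀ x ∈ σ, 0 ≤ u x) ∧ F = {x ∈ σ | u x = 0}

/-- The relative interior of a cone: points not lying on any proper face. -/
def relint (σ : Set E) : Set E :=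
  {x ∈ σ | ∀ F, IsFaceOf F σ → x ∈ F → F = σ}

/-- A quasifan: a finite set of polyhedral cones, closed under taking faces, such that
the intersection of any two of its cones is a face of each. -/
def IsQuasifan (Λ : Set (Set E)) : Prop :=
  Λ.Finite ∧ (∀ σ ∈ Λ, IsPolyCone σ) ∧
  (∀ σ ∈ Λ, ∀ F, IsFaceOf F σ → F ∈ Λ) ∧
  (∀ σ ∈ Λ, ∀ τ ∈ Λ, IsFaceOf (σ ∩ τ) σ)

/-- A cone is strictly convex (pointed) if it contains no line. -/
def IsPointed (σ : Set E) : Prop := σ ∩ (-σ) ⊆ {0}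

/-- A fan: a quasifan all of whose cones are strictly convex. -/
def IsFan (Λ : Set (Set E)) : Prop := IsQuasifan Λ ∧ ∀ σ ∈ Λ, IsPointed σ

/-- The support of a quasifan. -/
def fanSupp (Λ : Set (Set E)) : Set E := ⋃₀ Λ

/-- A support map on a quasifan `Δ`: a map that is linear on every cone of `Δ`. -/
def IsSupportMap (Δ : Set (Set E)) (h : E → V) : Prop :=
  ∀ σ ∈ Δ, ∃ L : E →ₗ[ℚ] V, ∀ x ∈ σ, h x = L x

/-- The graph of a support map over the support of the quasifan. -/
def graphOf (Δ : Set (Set E)) (h : E → V) : Set (E × V) :=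
  {p | ∃ v ∈ fanSupp Δ, p = (v, h v)}

/-- The cone generated by the graph of a support map. -/
def gammaCone (Δ : Set (Set E)) (h : E → V) : Set (E × V) := coneHull (graphOf Δ h)

/-- The filled graph `Λ_h`: the minimal subquasifan of the face quasifan of `γ` whose
support contains the graph, i.e. it is generated by the faces of `γ` whose relative
interior meets the graph. -/
def filledGraph (Δ : Set (Set E)) (h : E → V) : Set (Set (E × V)) :=
  {δ | ∃ δ', IsFaceOf δ' (gammaCone Δ h) ∧ (relint δ' ∩ graphOf Δ h).Nonempty ∧
    IsFaceOf δ δ'}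

/-- A support map is convex if the projection to the first factor is injective on the
support of the filled graph. -/
def IsConvexSM (Δ : Set (Set E)) (h : E → V) : Prop :=
  IsSupportMap Δ h ∧ Set.InjOn (Prod.fst : E × V → E) (⋃₀ filledGraph Δ h)

/-- The quasifan `Σ_h` associated to a convex support map: the projections of the cones
of the filled graph. -/
def sigmaFan (Δ : Set (Set E)) (h : E → V) : Set (Set E) :=
  (Set.image (Prod.fst : E × V → E)) '' filledGraph Δ h

/-- A strictly convex support map. -/
def IsStrictlyConvexSM (Δ : Set (Set E)) (h : E → V) : Prop :=
  IsConvexSM Δ h ∧ sigmaFan Δ h = Δ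



lemma subset_coneHull (s : Set E) : s ⊆ coneHull s := by
  intro x hx
  exact ⟨1, fun _ => 1, fun _ => x, fun _ => zero_le_one, fun _ => hx, by simp⟩

lemma zero_mem_coneHull (s : Set E) : (0:E) ∈ coneHull s :=
  ⟨0, fun i => 0, fun i => i.elim0, fun i => i.elim0, fun i => i.elim0, by simp⟩

lemma coneHull_mono {s t : Set E} (h : s ⊆ t) : coneHull s ⊆ coneHull t := by
  rintro x ⟨m, c, v, hc, hv, rfl⟩
  exact ⟨m, c, v, hc, fun i => h (hv i), rfl⟩

lemma add_mem_coneHull {s : Set E} {x y : E} (hx : x ∈ coneHull s) (hy : y ∈ coneHull s) :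
    x + y ∈ coneHull s := by
  obtain ⟨m, c, v, hc, hv, rfl⟩ := hx
  obtain ⟨m', c', v', hc', hv', rfl⟩ := hy
  refine ⟨m + m', Fin.append c c', Fin.append v v', ?_, ?_, ?_⟩
  · intro i
    refine Fin.addCases (fun j => ?_) (fun j => ?_) i
    · simpa [Fin.append_left] using hc j
    · simpa [Fin.append_right] using hc' j
  · intro i
    refine Fin.addCases (fun j => ?_) (fun j => ?_) i
    · simpa [Fin.append_left] using hv j
    · simpa [Fin.append_right] using hv' j
  · rw [Fin.sum_univ_add]
    simp [Fin.append_left, Fin.append_right]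

lemma smul_mem_coneHull {s : Set E} {a : ℚ} (ha : 0 ≤ a) {x : E} (hx : x ∈ coneHull s) :
    a • x ∈ coneHull s := by
  obtain ⟨m, c, v, hc, hv, rfl⟩ := hx
  refine ⟨m, fun i => a * c i, v, fun i => mul_nonneg ha (hc i), hv, ?_⟩
  rw [Finset.smul_sum]
  simp [smul_smul]

lemma coneHull_subset {s t : Set E} (h : s ⊆ coneHull t) : coneHull s ⊆ coneHull t := by
  rintro x ⟨m, c, v, hc, hv, rfl⟩
  refine Finset.sum_induction _ (· ∈ coneHull t) (fun a b ha hb => add_mem_coneHull ha hb)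
    (zero_mem_coneHull t) ?_
  intro i _
  exact smul_mem_coneHull (hc i) (h (hv i))

lemma image_coneHull (G : E →ₗ[ℚ] V) {s : Set E} {x : E} (hx : x ∈ coneHull s) :
    G x ∈ coneHull (G '' s) := by
  obtain ⟨m, c, v, hc, hv, rfl⟩ := hx
  exact ⟨m, c, fun i => G (v i), hc, fun i => ⟨v i, hv i, rfl⟩, by simp [map_sum, map_smul]⟩

lemma IsFaceOf.refl' (σ : Set E) : IsFaceOf σ σ :=
  ⟨0, fun x _ => le_rfl, by ext x; simp⟩

lemma IsFaceOf.subset' {F σ : Set E} (h : IsFaceOf F σ) : F ⊆ σ := by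
  obtain ⟨u, _, rfl⟩ := h; exact fun x hx => hx.1

lemma exists_face_relint [FiniteDimensional ℚ E] {σ : Set E} (hσ : IsPolyCone σ)
    {q : E} (hq : q ∈ σ) : ∃ M, IsFaceOf M σ ∧ q ∈ relint M := by
  classical
  obtain ⟨s, hsfin, rfl⟩ := hσ
  set U : Set (E →ₗ[ℚ] ℚ) := {u | (∀ x ∈ coneHull s, 0 ≤ u x) ∧ u q = 0} with hUdef
  have hU0 : (0 : E →ₗ[ℚ] ℚ) ∈ U := ⟨fun x _ => le_rfl, rfl⟩
  set face : (E →ₗ[ℚ] ℚ) → Set E := fun u => {x ∈ coneHull s | u x = 0} with hfacedef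
  set r : (E →ₗ[ℚ] ℚ) → ℕ := fun u => Module.finrank ℚ (Submodule.span ℚ (face u)) with hrdef
  have hne : (r '' U).Nonempty := ⟨r 0, 0, hU0, rfl⟩
  obtain ⟨u₀, hu₀U, hu₀r⟩ := Nat.sInf_mem hne
  have hmin : ∀ u ∈ U, r u₀ ≤ r u := fun u hu => hu₀r ▸ Nat.sInf_le ⟨u, hu, rfl⟩
  have key : ∀ u ∈ U, face u₀ ⊆ face u := by
    intro u hu
    have hsumU : u₀ + u ∈ U := by
      refine ⟨fun x hx => ?_, by simp [LinearMap.add_apply, hu₀U.2, hu.2]⟩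
      simpa using add_nonneg (hu₀U.1 x hx) (hu.1 x hx)
    have hsub : face (u₀ + u) ⊆ face u₀ := by
      rintro x ⟨hxσ, hx0⟩
      have h1 := hu₀U.1 x hxσ
      have h2 := hu.1 x hxσ
      simp only [LinearMap.add_apply] at hx0
      exact ⟨hxσ, by linarith⟩
    have hspan : Submodule.span ℚ (face (u₀+u)) = Submodule.span ℚ (face u₀) :=
      Submodule.eq_of_le_of_finrank_le (Submodule.span_mono hsub) (hmin _ hsumU)
    intro x hx
    have hxspan : x ∈ Submodule.span ℚ (face (u₀+u)) := by
      rw [hspan]; exact Submodule.subset_span hx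
    have hker : Submodule.span ℚ (face (u₀+u)) ≤ LinearMap.ker u := by
      rw [Submodule.span_le]
      rintro y ⟨hyσ, hy0⟩
      have h1 := hu₀U.1 y hyσ
      have h2 := hu.1 y hyσ
      simp only [LinearMap.add_apply] at hy0
      simp only [SetLike.mem_coe, LinearMap.mem_ker]
      linarith
    exact ⟨hx.1, hker hxspan⟩
  refine ⟨face u₀, ⟨u₀, hu₀U.1, rfl⟩, ⟨⟨hq, hu₀U.2⟩, ?_⟩⟩
  rintro Fc ⟨w, hw, rfl⟩ ⟨hqM, hqw⟩
  -- build w' = w + C • u₀ nonneg on coneHull s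
  set t := hsfin.toFinset with htdef
  set C : ℚ := ∑ v ∈ t, max 0 (-(w v)/(u₀ v)) with hCdef
  have hCge : ∀ v ∈ t, -(w v)/(u₀ v) ≤ C := by
    intro v hv
    calc -(w v)/(u₀ v) ≤ max 0 (-(w v)/(u₀ v)) := le_max_right _ _
      _ ≤ C := Finset.single_le_sum (f := fun v => max 0 (-(w v)/(u₀ v)))
          (fun v _ => le_max_left _ _) hv
  set w' : E →ₗ[ℚ] ℚ := w + C • u₀ with hw'def
  have hgen : ∀ v ∈ s, 0 ≤ w' v := by
    intro v hv
    have hvσ : v ∈ coneHull s := subset_coneHull s hv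
    have hv0 : 0 ≤ u₀ v := hu₀U.1 v hvσ
    rcases eq_or_lt_of_le hv0 with h0 | h0
    · have hvM : v ∈ face u₀ := ⟨hvσ, h0.symm⟩
      have hwv := hw v hvM
      simp only [hw'def, LinearMap.add_apply, LinearMap.smul_apply, smul_eq_mul, ← h0,
        mul_zero, add_zero]
      exact hwv
    · have hC := hCge v (hsfin.mem_toFinset.mpr hv)
      rw [div_le_iff₀ h0] at hC
      simp only [hw'def, LinearMap.add_apply, LinearMap.smul_apply, smul_eq_mul]
      linarith
  have hw'σ : ∀ x ∈ coneHull s, 0 ≤ w' x := by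
    rintro x ⟨m, c, v, hc, hv, rfl⟩
    rw [map_sum]
    refine Finset.sum_nonneg fun i _ => ?_
    rw [map_smul, smul_eq_mul]
    exact mul_nonneg (hc i) (hgen _ (hv i))
  have hw'U : w' ∈ U := by
    refine ⟨hw'σ, ?_⟩
    simp [hw'def, hqw, hu₀U.2]
  have hsub := key w' hw'U
  ext x
  constructor
  · rintro ⟨hxM, _⟩; exact hxM
  · intro hxM
    have hx' := hsub hxM
    have hxu : u₀ x = 0 := hxM.2
    refine ⟨hxM, ?_⟩
    have h2 := hx'.2
    simp only [hw'def, LinearMap.add_apply, LinearMap.smul_apply, smul_eq_mul, hxu,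
      mul_zero, add_zero] at h2
    exact h2



lemma graphOf_subset_gammaCone (Δ : Set (Set E)) (h : E → V) :
    graphOf Δ h ⊆ gammaCone Δ h := subset_coneHull _

lemma gammaCone_poly {Δ' : Set (Set E)} {h' : E → V} (hQ : IsQuasifan Δ')
    (hsm : IsSupportMap Δ' h') : IsPolyCone (gammaCone Δ' h') := by
  classical
  choose! gen hfin heq using hQ.2.1
  refine ⟨⋃ σ' ∈ Δ', (fun v => (v, h' v)) '' gen σ', ?_, ?_⟩
  · exact Set.Finite.biUnion hQ.1 (fun σ' hσ' => ((hfin σ' hσ').image _))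
  · apply Set.Subset.antisymm
    · -- gammaCone ⊆ coneHull T : via graph ⊆ coneHull T
      apply coneHull_subset
      rintro p ⟨v, ⟨σ', hσ', hvσ'⟩, rfl⟩
      obtain ⟨L, hL⟩ := hsm σ' hσ'
      have hv' : v ∈ coneHull (gen σ') := by rw [← heq σ' hσ']; exact hvσ'
      obtain ⟨m, c, g, hc, hg, hveq⟩ := hv'
      have hgenσ : ∀ i, g i ∈ σ' := fun i => (heq σ' hσ') ▸ subset_coneHull _ (hg i)
      refine ⟨m, c, fun i => (g i, h' (g i)), hc, ?_, ?_⟩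
      · intro i
        exact Set.mem_biUnion hσ' ⟨g i, hg i, rfl⟩
      · ext
        · simp [hveq, Prod.fst_sum]
        · have : h' v = ∑ i, c i • h' (g i) := by
            rw [hL v hvσ', hveq, map_sum]
            refine Finset.sum_congr rfl fun i _ => ?_
            rw [map_smul, hL (g i) (hgenσ i)]
          simp [this, Prod.snd_sum]
    · apply coneHull_mono
      rintro p hp
      simp only [Set.mem_iUnion] at hp
      obtain ⟨σ', hσ', v, hv, rfl⟩ := hp
      have hvσ' : v ∈ σ' := (heq σ' hσ') ▸ subset_coneHull _ hv
      exact ⟨v, ⟨σ', hσ', hvσ'⟩, rfl⟩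


end ToricQuot

open ToricQuot in
/-- **Lemma 3.3 (Pullback of convex support maps).** Let `F : N → N'` be a map of fans
`Δ` and `Δ'` (a lattice homomorphism whose rational extension `Fq` maps each cone of `Δ`
into a cone of `Δ'`).  If `h' : |Δ'| → ℚ^k` is a convex support map on `Δ'`, then
`h := h' ∘ F` is a convex support map on `Δ`, and `F` is a map of the associated
quasifans `Σ_h` and `Σ_{h'}`. -/
theorem pullback_convex_support_map (n n' k : ℕ)
    (Δ : Set (Set (Fin n → ℚ))) (Δ' : Set (Set (Fin n' → ℚ)))
    (F : (Fin n → ℤ) →+ (Fin n' → ℤ))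
    (Fq : (Fin n → ℚ) →ₗ[ℚ] (Fin n' → ℚ))
    (hFq : ∀ v : Fin n → ℤ, Fq (fun i => (v i : ℚ)) = fun j => (F v j : ℚ))
    (hΔ : IsFan Δ) (hΔ' : IsFan Δ')
    (hmap : ∀ σ ∈ Δ, ∃ σ' ∈ Δ', Fq '' σ ⊆ σ')
    (h' : (Fin n' → ℚ) → (Fin k → ℚ))
    (hconv : IsConvexSM Δ' h') :
    IsConvexSM Δ (h' ∘ Fq) ∧
    ∀ σ ∈ sigmaFan Δ (h' ∘ Fq), ∃ σ' ∈ sigmaFan Δ' h', Fq '' σ ⊆ σ' := by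

  obtain ⟨hsm', hinj'⟩ := hconv
  set G : (Fin n → ℚ) × (Fin k → ℚ) →ₗ[ℚ] (Fin n' → ℚ) × (Fin k → ℚ) :=
    Fq.prodMap LinearMap.id with hGdef
  have hGapp : ∀ p : (Fin n → ℚ) × (Fin k → ℚ), G p = (Fq p.1, p.2) := fun p => rfl
  have hGgraph : ∀ p ∈ graphOf Δ (h' ∘ Fq), G p ∈ graphOf Δ' h' := by
    rintro p ⟨v, ⟨σ, hσ, hvσ⟩, rfl⟩
    obtain ⟨σ', hσ', hsub⟩ := hmap σ hσ
    exact ⟨Fq v, ⟨σ', hσ', hsub ⟨v, hvσ, rfl⟩⟩, rfl⟩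
  have hGgamma : ∀ p ∈ gammaCone Δ (h' ∘ Fq), G p ∈ gammaCone Δ' h' := by
    intro p hp
    refine coneHull_subset ?_ (image_coneHull G hp)
    rintro q ⟨q', hq', rfl⟩
    exact subset_coneHull _ (hGgraph q' hq')
  have hpoly : IsPolyCone (gammaCone Δ' h') := gammaCone_poly hΔ'.1 hsm'
  -- the key per-cone statement
  have key : ∀ δ ∈ filledGraph Δ (h' ∘ Fq), ∃ δ'' ∈ filledGraph Δ' h', ∀ x ∈ δ, G x ∈ δ'' := by
    rintro δ ⟨δ', hδ'face, ⟨p, hpri, hpg⟩, hδface⟩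
    have hδ'γ : δ' ⊆ gammaCone Δ (h' ∘ Fq) := hδ'face.subset'
    have hGp : G p ∈ graphOf Δ' h' := hGgraph p hpg
    have hGpγ : G p ∈ gammaCone Δ' h' := subset_coneHull _ hGp
    obtain ⟨M, hMface, hMri⟩ := exists_face_relint hpoly hGpγ
    refine ⟨M, ⟨M, hMface, ⟨G p, hMri, hGp⟩, IsFaceOf.refl' M⟩, ?_⟩
    obtain ⟨u', hu'pos, hMeq⟩ := hMface
    set u : (Fin n → ℚ) × (Fin k → ℚ) →ₗ[ℚ] ℚ := u'.comp G with hudef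
    have hfδ' : IsFaceOf {x ∈ δ' | u x = 0} δ' :=
      ⟨u, fun x hx => hu'pos (G x) (hGgamma x (hδ'γ hx)), rfl⟩
    have hpu : u p = 0 := by
      have : G p ∈ M := hMri.1
      rw [hMeq] at this
      exact this.2
    have heq : {x ∈ δ' | u x = 0} = δ' := hpri.2 _ hfδ' ⟨hpri.1, hpu⟩
    intro x hx
    have hxδ' : x ∈ δ' := hδface.subset' hx
    have hxu : u x = 0 := by
      have hx2 : x ∈ {x ∈ δ' | u x = 0} := by rw [heq]; exact hxδ'
      exact hx2.2
    rw [hMeq]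
    exact ⟨hGgamma x (hδ'γ hxδ'), hxu⟩
  refine ⟨⟨?_, ?_⟩, ?_⟩
  · -- IsSupportMap
    intro σ hσ
    obtain ⟨σ', hσ', hsub⟩ := hmap σ hσ
    obtain ⟨L, hL⟩ := hsm' σ' hσ'
    exact ⟨L.comp Fq, fun x hx => by simp [hL (Fq x) (hsub ⟨x, hx, rfl⟩)]⟩
  · -- InjOn
    rintro p ⟨δp, hδp, hpδ⟩ q ⟨δq, hδq, hqδ⟩ hfst
    obtain ⟨δp'', hδp'', hGp⟩ := key δp hδp
    obtain ⟨δq'', hδq'', hGq⟩ := key δq hδq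
    have hGeq : G p = G q := by
      apply hinj' ⟨δp'', hδp'', hGp p hpδ⟩ ⟨δq'', hδq'', hGq q hqδ⟩
      simp only [hGapp]
      exact congrArg Fq hfst
    have hsnd : p.2 = q.2 := by
      have := congrArg Prod.snd hGeq
      simpa [hGapp] using this
    exact Prod.ext hfst hsnd
  · -- map of sigma fans
    rintro σ ⟨δ, hδ, rfl⟩
    obtain ⟨δ'', hδ'', hGδ⟩ := key δ hδ
    refine ⟨Prod.fst '' δ'', ⟨δ'', hδ'', rfl⟩, ?_⟩
    rintro y ⟨x, ⟨p, hpδ, rfl⟩, rfl⟩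
    exact ⟨G p, hGδ p hpδ, rfl⟩
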